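/- Fix real numbers η₁, η₂, η₃. For a third-order tensor A : Fin 3 → Fin 3 → Fin 3 → ℝ satisfying the symmetry A i j k = A i k j for all i, j, k, and the trace condition ∑ᵢ A i i k = 0 for all k, set bᵢ = ∑ᵣ A i r r, Sᵢⱼₖ = (Aᵢⱼₖ + Aⱼᵢₖ)/2, Wᵢⱼₖ = (Aᵢⱼₖ − Aⱼᵢₖ)/2, Ŝᵢⱼₖ = Sᵢⱼₖ − (1/8)(δᵢₖ bⱼ + δⱼₖ bᵢ), and Ŵᵢⱼₖ = Wᵢⱼₖ + (1/4)(δᵢₖ bⱼ − δⱼₖ bᵢ). Then the quadratic form Q(A) = η₁ ∑ᵢⱼₖ Aᵢⱼₖ² + 2η₂ ∑ᵢⱼₖ Aᵢⱼₖ Aₖᵢⱼ − (η₂ + 4η₃) ∑ᵢ bᵢ² satisfies the identity Q(A) = (η₁ + 2η₂) ∑ᵢⱼₖ Ŝᵢⱼₖ² + (η₁ − 2η₂) ∑ᵢⱼₖ Ŵᵢⱼₖ² + (1/8)(3η₁ − 10η₂ − 32η₃) ∑ᵢ bᵢ². -/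
import Mathlib


open Finset

/-- Decomposition of the second-gradient dissipation quadratic form into
deviatoric-stretching, deviatoric-spin, and Laplacian parts. -/
theorem dissipation_quadratic_form_decomposition
    (η₁ η₂ η₃ : ℝ) (A : Fin 3 → Fin 3 → Fin 3 → ℝ)
    (hsym : ∀ i j k, A i j k = A i k j)
    (htr : ∀ k, ∑ i, A i i k = 0)
    (b : Fin 3 → ℝ) (hb : ∀ i, b i = ∑ r, A i r r)
    (S : Fin 3 → Fin 3 → Fin 3 → ℝ)
    (hS : ∀ i j k, S i j k = (A i j k + A j i k) / 2)
    (W : Fin 3 → Fin 3 → Fin 3 → ℝ)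
    (hW : ∀ i j k, W i j k = (A i j k - A j i k) / 2)
    (Sh : Fin 3 → Fin 3 → Fin 3 → ℝ)
    (hSh : ∀ i j k, Sh i j k =
      S i j k - (1 / 8) * ((if i = k then (1:ℝ) else 0) * b j
        + (if j = k then (1:ℝ) else 0) * b i))
    (Wh : Fin 3 → Fin 3 → Fin 3 → ℝ)
    (hWh : ∀ i j k, Wh i j k =
      W i j k + (1 / 4) * ((if i = k then (1:ℝ) else 0) * b j
        - (if j = k then (1:ℝ) else 0) * b i)) :
    η₁ * (∑ i, ∑ j, ∑ k, (A i j k) ^ 2)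
      + 2 * η₂ * (∑ i, ∑ j, ∑ k, A i j k * A k i j)
      - (η₂ + 4 * η₃) * (∑ i, (b i) ^ 2)
    = (η₁ + 2 * η₂) * (∑ i, ∑ j, ∑ k, (Sh i j k) ^ 2)
      + (η₁ - 2 * η₂) * (∑ i, ∑ j, ∑ k, (Wh i j k) ^ 2)
      + (1 / 8) * (3 * η₁ - 10 * η₂ - 32 * η₃) * (∑ i, (b i) ^ 2) := by
  have h10 := hsym 0 1 0; have h20 := hsym 0 2 0; have h21 := hsym 0 2 1
  have g10 := hsym 1 1 0; have g20 := hsym 1 2 0; have g21 := hsym 1 2 1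
  have f10 := hsym 2 1 0; have f20 := hsym 2 2 0; have f21 := hsym 2 2 1
  have t0 := htr 0; have t1 := htr 1; have t2 := htr 2
  simp only [Fin.sum_univ_three] at t0 t1 t2
  have e0 : A 2 2 0 = -(A 0 0 0 + A 1 1 0) := by linarith
  have e1 : A 2 2 1 = -(A 0 0 1 + A 1 1 1) := by linarith
  have e2 : A 2 2 2 = -(A 0 0 2 + A 1 1 2) := by linarith
  simp only [hSh, hWh, hS, hW, hb, Fin.sum_univ_three]
  norm_num [Fin.ext_iff]
  rw [h10, h20, h21, g10, g20, g21, f10, f20, f21] at *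
  rw [e0, e1, e2]
  ring
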